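/- For fixed interval constraints (P̌, P̂) on a finite set Q admitting at least one valid distribution, and any value function V : Q → [0,1], the maximum of ∑_q Δ(q) V(q) over valid distributions Δ is attained, and it is attained by the following ordering construction: sort states in decreasing order of V, assign each state its upper bound P̂ greedily until the remaining mass forces lower bounds, i.e., the optimal Δ assigns Δ(q_i) = min(P̂(q_i), 1 − ∑_{j<i} Δ(q_j) − ∑_{j>i} P̌(q_j)) in that order. -/

import Mathlib

/-!
The partial sums `C k = greedyCum Ph Pl n k` satisfy
`C k + ∑_{j ≥ k} Pl j ≤ 1 ≤ C k + ∑_{j ≥ k} Ph j`, which makes every greedy step feasible and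
gives total mass `C n = 1`. The same induction shows that the prefix sums of any valid
distribution `d` stay below `C`: the greedy distribution moves mass as early as possible.
Since `V` decreases along the order, summation by parts turns this prefix dominance into
`∑ d V ≤ ∑ Δ V`.
-/

open Finset

/-- Cumulative mass assigned by the greedy adversary construction to the first `i`
states (states indexed `0, …, n-1` in decreasing order of value). -/
noncomputable def greedyCum (Ph Pl : ℕ → ℝ) (n : ℕ) : ℕ → ℝ
  | 0 => 0
  | i + 1 => greedyCum Ph Pl n i +
      min (Ph i) (1 - greedyCum Ph Pl n i - ∑ j ∈ Finset.Ico (i + 1) n, Pl j)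

/-- The greedy adversary distribution: `Δ i = min (Ph i) (1 - ∑_{j<i} Δ j - ∑_{j>i} Pl j)`. -/
noncomputable def greedyDist (Ph Pl : ℕ → ℝ) (n : ℕ) (i : ℕ) : ℝ :=
  greedyCum Ph Pl n (i + 1) - greedyCum Ph Pl n i

theorem sum_range_mul_le_of_sum_range_le {a b V : ℕ → ℝ} {n : ℕ}
    (hprefix : ∀ k ≤ n, ∑ i ∈ range k, a i ≤ ∑ i ∈ range k, b i)
    (htotal : ∑ i ∈ range n, a i = ∑ i ∈ range n, b i) (hV : AntitoneOn V (Set.Iio n)) :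
    ∑ i ∈ range n, a i * V i ≤ ∑ i ∈ range n, b i * V i := by
  have hparts := sum_range_by_parts V (fun i => b i - a i) n
  simp only [smul_eq_mul, sum_sub_distrib, htotal, sub_self, mul_zero, zero_sub] at hparts
  have hterm : ∀ i ∈ range (n - 1),
      (V (i + 1) - V i) * (∑ j ∈ range (i + 1), b j - ∑ j ∈ range (i + 1), a j) ≤ 0 := by
    intro i hi
    have hsucc : i + 1 < n := by rw [mem_range] at hi; omega
    refine mul_nonpos_of_nonpos_of_nonneg ?_ (sub_nonneg.2 (hprefix _ hsucc.le))
    exact sub_nonpos.2 (hV (Set.mem_Iio.2 (by omega)) (Set.mem_Iio.2 hsucc) i.le_succ)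
  rw [← sub_nonneg, ← sum_sub_distrib]
  simp only [← sub_mul, mul_comm (b _ - a _)]
  linarith [sum_nonpos hterm]

section Greedy

variable {Ph Pl : ℕ → ℝ} {n : ℕ}

theorem greedyDist_eq (i : ℕ) :
    greedyDist Ph Pl n i = min (Ph i) (1 - greedyCum Ph Pl n i - ∑ j ∈ Ico (i + 1) n, Pl j) := by
  rw [greedyDist, greedyCum, add_sub_cancel_left]

theorem sum_range_greedyDist (k : ℕ) :
    ∑ i ∈ range k, greedyDist Ph Pl n i = greedyCum Ph Pl n k :=
  (sum_range_sub (greedyCum Ph Pl n) k).trans (sub_zero _)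

theorem greedyCum_add_sum_Ico_le_one (hsuml : ∑ i ∈ range n, Pl i ≤ 1) (i : ℕ) :
    greedyCum Ph Pl n i + ∑ j ∈ Ico i n, Pl j ≤ 1 := by
  cases i with
  | zero => rwa [greedyCum, zero_add, ← range_eq_Ico]
  | succ i =>
    rw [greedyCum]
    linarith [min_le_right (Ph i) (1 - greedyCum Ph Pl n i - ∑ j ∈ Ico (i + 1) n, Pl j)]

theorem one_sub_sum_Ico_le_greedyCum (hle : ∀ i < n, Pl i ≤ Ph i)
    (hsumu : 1 ≤ ∑ i ∈ range n, Ph i) {i : ℕ} (hi : i ≤ n) :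
    1 - ∑ j ∈ Ico i n, Ph j ≤ greedyCum Ph Pl n i := by
  induction i with
  | zero => rw [greedyCum, ← range_eq_Ico]; linarith
  | succ i ih =>
    have ih := ih (by omega)
    rw [sum_eq_sum_Ico_succ_bot (by omega)] at ih
    have hPlPh : ∑ j ∈ Ico (i + 1) n, Pl j ≤ ∑ j ∈ Ico (i + 1) n, Ph j :=
      sum_le_sum fun j hj => hle j (mem_Ico.1 hj).2
    rw [greedyCum]
    rcases min_cases (Ph i) (1 - greedyCum Ph Pl n i - ∑ j ∈ Ico (i + 1) n, Pl j) with
      ⟨hmin, _⟩ | ⟨hmin, _⟩ <;> rw [hmin] <;> linarith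

theorem greedyCum_eq_one (hle : ∀ i < n, Pl i ≤ Ph i) (hsuml : ∑ i ∈ range n, Pl i ≤ 1)
    (hsumu : 1 ≤ ∑ i ∈ range n, Ph i) : greedyCum Ph Pl n n = 1 := by
  have hupper := greedyCum_add_sum_Ico_le_one (Ph := Ph) hsuml n
  have hlower := one_sub_sum_Ico_le_greedyCum hle hsumu le_rfl
  simp only [Ico_self, sum_empty] at hupper hlower
  linarith

theorem greedyDist_mem_Icc (hle : ∀ i < n, Pl i ≤ Ph i) (hsuml : ∑ i ∈ range n, Pl i ≤ 1)
    {i : ℕ} (hi : i < n) : Pl i ≤ greedyDist Ph Pl n i ∧ greedyDist Ph Pl n i ≤ Ph i := by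
  have hupper := greedyCum_add_sum_Ico_le_one (Ph := Ph) hsuml i
  rw [sum_eq_sum_Ico_succ_bot hi] at hupper
  rw [greedyDist_eq]
  exact ⟨le_min (hle i hi) (by linarith), min_le_left _ _⟩

theorem sum_range_le_greedyCum {d : ℕ → ℝ} (hd : ∀ i < n, Pl i ≤ d i ∧ d i ≤ Ph i)
    (hdsum : ∑ i ∈ range n, d i = 1) {k : ℕ} (hk : k ≤ n) :
    ∑ i ∈ range k, d i ≤ greedyCum Ph Pl n k := by
  induction k with
  | zero => simp [greedyCum]
  | succ k ih =>
    rw [greedyCum]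
    rcases min_cases (Ph k) (1 - greedyCum Ph Pl n k - ∑ j ∈ Ico (k + 1) n, Pl j) with
      ⟨hmin, _⟩ | ⟨hmin, _⟩ <;> rw [hmin]
    · rw [sum_range_succ]
      linarith [ih (by omega), (hd k (by omega)).2]
    · have hsplit := sum_range_add_sum_Ico d hk
      have hPld : ∑ j ∈ Ico (k + 1) n, Pl j ≤ ∑ j ∈ Ico (k + 1) n, d j :=
        sum_le_sum fun j hj => (hd j (mem_Ico.1 hj).2).1
      linarith

end Greedy

theorem greedy_adversary_is_optimal_general
    (n : ℕ) (Pl Ph V : ℕ → ℝ)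
    (hle : ∀ i < n, Pl i ≤ Ph i)
    (hsuml : ∑ i ∈ Finset.range n, Pl i ≤ 1) (hsumu : 1 ≤ ∑ i ∈ Finset.range n, Ph i)
    (hsort : ∀ i j, i ≤ j → j < n → V j ≤ V i) :
    ((∀ i < n, Pl i ≤ greedyDist Ph Pl n i ∧ greedyDist Ph Pl n i ≤ Ph i) ∧
        ∑ i ∈ Finset.range n, greedyDist Ph Pl n i = 1) ∧
      ∀ d : ℕ → ℝ, (∀ i < n, Pl i ≤ d i ∧ d i ≤ Ph i) →
        ∑ i ∈ Finset.range n, d i = 1 →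
        ∑ i ∈ Finset.range n, d i * V i ≤
          ∑ i ∈ Finset.range n, greedyDist Ph Pl n i * V i := by
  have hmass : ∑ i ∈ range n, greedyDist Ph Pl n i = 1 := by
    rw [sum_range_greedyDist, greedyCum_eq_one hle hsuml hsumu]
  refine ⟨⟨fun i hi => greedyDist_mem_Icc hle hsuml hi, hmass⟩, fun d hd hdsum => ?_⟩
  refine sum_range_mul_le_of_sum_range_le (fun k hk => ?_) (hdsum.trans hmass.symm)
    fun i hi j hj hij => hsort i j hij hj
  rw [sum_range_greedyDist]
  exact sum_range_le_greedyCum hd hdsum hk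

theorem greedy_adversary_is_optimal
    (n : ℕ) (Pl Ph V : ℕ → ℝ)
    (h0 : ∀ i < n, 0 ≤ Pl i) (h1 : ∀ i < n, Ph i ≤ 1) (hle : ∀ i < n, Pl i ≤ Ph i)
    (hsuml : ∑ i ∈ Finset.range n, Pl i ≤ 1) (hsumu : 1 ≤ ∑ i ∈ Finset.range n, Ph i)
    (hV : ∀ i < n, 0 ≤ V i ∧ V i ≤ 1)
    (hsort : ∀ i j, i ≤ j → j < n → V j ≤ V i) :
    ((∀ i < n, Pl i ≤ greedyDist Ph Pl n i ∧ greedyDist Ph Pl n i ≤ Ph i) ∧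
        ∑ i ∈ Finset.range n, greedyDist Ph Pl n i = 1) ∧
      ∀ d : ℕ → ℝ, (∀ i < n, Pl i ≤ d i ∧ d i ≤ Ph i) →
        ∑ i ∈ Finset.range n, d i = 1 →
        ∑ i ∈ Finset.range n, d i * V i ≤
          ∑ i ∈ Finset.range n, greedyDist Ph Pl n i * V i :=
  greedy_adversary_is_optimal_general n Pl Ph V hle hsuml hsumu hsort
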